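/- arXiv:2503.05181 — 2 statements merged into one kernel-verified Lean document; each statement's English description precedes it below -/
import Mathlib

section
/- For constants b > a > 0, the scalar D-gap function δ^{ab}(λ, η) = ((b-a)/(2ab))·η² - (1/(2a))·(max(0, η - aλ))² + (1/(2b))·(max(0, η - bλ))² is nonnegative for all real λ, η. -/
/-!
`deltaGap a b` is the difference `regularizedGap a - regularizedGap b` of two regularized gap
functions, and `regularizedGap t λ η` is the maximum of the concave quadratic `η v - t v² / 2`
over `v ≤ λ` (attained at `v = min λ (η / t)`). Each such quadratic decreases in `t`, hence so
does their maximum, and `a < b` gives `deltaGap a b λ η ≥ 0`.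
-/

noncomputable def deltaGap (a b l e : ℝ) : ℝ :=
  ((b - a) / (2 * a * b)) * e ^ 2 - (1 / (2 * a)) * (max 0 (e - a * l)) ^ 2
    + (1 / (2 * b)) * (max 0 (e - b * l)) ^ 2

noncomputable def regularizedGap (t l e : ℝ) : ℝ :=
  (e ^ 2 - (max 0 (e - t * l)) ^ 2) / (2 * t)

theorem deltaGap_eq_sub_regularizedGap {a b : ℝ} (ha : a ≠ 0) (hb : b ≠ 0) (l e : ℝ) :
    deltaGap a b l e = regularizedGap a l e - regularizedGap b l e := by
  unfold deltaGap regularizedGap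
  field_simp
  ring

theorem isGreatest_regularizedGap {t : ℝ} (ht : 0 < t) (l e : ℝ) :
    IsGreatest ((fun v => e * v - t * v ^ 2 / 2) '' Set.Iic l) (regularizedGap t l e) := by
  unfold regularizedGap
  rcases le_or_gt (e - t * l) 0 with hle | hgt
  · rw [max_eq_left hle]
    refine ⟨⟨e / t, ?_, ?_⟩, ?_⟩
    · rw [Set.mem_Iic, div_le_iff₀ ht]
      linarith
    · field_simp
      ring
    · rintro _ ⟨v, -, rfl⟩
      rw [le_div_iff₀ (by positivity)]
      nlinarith [sq_nonneg (e - t * v)]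
  · rw [max_eq_right hgt.le]
    refine ⟨⟨l, Set.self_mem_Iic, ?_⟩, ?_⟩
    · field_simp
      ring
    · rintro _ ⟨v, hv, rfl⟩
      rw [Set.mem_Iic] at hv
      -- twice the gap between the value at `l` and at `v` factors as this product
      have hfactor : 0 ≤ (l - v) * (2 * e - t * (l + v)) :=
        mul_nonneg (by linarith) (by nlinarith)
      rw [le_div_iff₀ (by positivity)]
      nlinarith

theorem regularizedGap_antitoneOn (l e : ℝ) :
    AntitoneOn (fun t => regularizedGap t l e) (Set.Ioi 0) := by
  intro a ha b hb hab
  obtain ⟨⟨v, hv, hvb⟩, -⟩ := isGreatest_regularizedGap hb l e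
  refine le_trans ?_ ((isGreatest_regularizedGap ha l e).2 ⟨v, hv, rfl⟩)
  change regularizedGap b l e ≤ e * v - a * v ^ 2 / 2
  rw [← hvb]
  nlinarith [mul_nonneg (sub_nonneg.2 hab) (sq_nonneg v)]

theorem deltaGap_nonneg (a b : ℝ) (ha : 0 < a) (hab : a < b) :
    ∀ l e : ℝ, 0 ≤ deltaGap a b l e := by
  intro l e
  have hb : 0 < b := ha.trans hab
  rw [deltaGap_eq_sub_regularizedGap ha.ne' hb.ne', sub_nonneg]
  exact regularizedGap_antitoneOn l e ha hb hab.le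
end

section
/- For the scalar D-gap function with 0 < a < b, the product of its partial derivatives is nonnegative at every point: ∂δ^{ab}/∂λ(λ, η) · ∂δ^{ab}/∂η(λ, η) ≥ 0 for all λ, η ∈ ℝ. -/
/-!
With `p = max 0 (η - aλ)` and `q = max 0 (η - bλ)` one has `∂δ/∂λ = p - q` and
`ab · ∂δ/∂η = (b - a)η - bp + aq`. Where `aλ < η ≤ bλ` both factors are nonnegative
(the second is `a(bλ - η)`), where `bλ < η ≤ aλ` both are nonpositive (the second is
`b(η - aλ)`), and where `η` exceeds both `aλ` and `bλ` the second vanishes.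
-/

open Asymptotics Filter

theorem hasDerivAt_max_zero_sq (x : ℝ) :
    HasDerivAt (fun y : ℝ => max 0 y ^ 2) (2 * max 0 x) x := by
  rcases lt_trichotomy x 0 with hx | rfl | hx
  · rw [max_eq_left hx.le, mul_zero]
    refine (hasDerivAt_const x (0 : ℝ)).congr_of_eventuallyEq ?_
    filter_upwards [eventually_lt_nhds hx] with y hy
    simp [max_eq_left hy.le]
  · rw [max_self, mul_zero, hasDerivAt_iff_isLittleO_nhds_zero]
    simp only [zero_add, max_self, ne_eq, OfNat.ofNat_ne_zero, not_false_eq_true, zero_pow,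
      sub_zero, smul_zero]
    refine IsBigO.trans_isLittleO ?_ (isLittleO_pow_id one_lt_two)
    refine IsBigO.of_bound 1 (Eventually.of_forall fun y => ?_)
    simp only [norm_pow, Real.norm_eq_abs, one_mul]
    have hmax : |max 0 y| ≤ |y| :=
      (abs_of_nonneg (le_max_left 0 y)).trans_le (max_le (abs_nonneg y) (le_abs_self y))
    exact pow_le_pow_left₀ (abs_nonneg _) hmax 2
  · rw [max_eq_right hx.le]
    have hsq : HasDerivAt (fun y : ℝ => y ^ 2) (2 * x) x := by simpa using hasDerivAt_pow 2 x
    refine hsq.congr_of_eventuallyEq ?_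
    filter_upwards [eventually_gt_nhds hx] with y hy
    rw [max_eq_right hy.le]

theorem max_zero_sub_mul_nonneg {a b : ℝ} (ha : 0 ≤ a) (hb : 0 ≤ b) (l e : ℝ) :
    0 ≤ (max 0 (e - a * l) - max 0 (e - b * l))
      * ((b - a) * e - b * max 0 (e - a * l) + a * max 0 (e - b * l)) := by
  rcases le_total (e - a * l) 0 with hal | hal <;> rcases le_total (e - b * l) 0 with hbl | hbl
  · simp [max_eq_left hal, max_eq_left hbl]
  · rw [max_eq_left hal, max_eq_right hbl]
    nlinarith [mul_nonneg (mul_nonneg hb hbl) (neg_nonneg.2 hal)]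
  · rw [max_eq_right hal, max_eq_left hbl]
    nlinarith [mul_nonneg (mul_nonneg ha hal) (neg_nonneg.2 hbl)]
  · rw [max_eq_right hal, max_eq_right hbl]
    exact le_of_eq (by ring)

theorem hasDerivAt_deltaGap_fst {a b : ℝ} (ha : a ≠ 0) (hb : b ≠ 0) (l e : ℝ) :
    HasDerivAt (fun x => deltaGap a b x e) (max 0 (e - a * l) - max 0 (e - b * l)) l := by
  have hA := (hasDerivAt_max_zero_sq (e - a * l)).comp l
    (((hasDerivAt_id l).const_mul a).const_sub e)
  have hB := (hasDerivAt_max_zero_sq (e - b * l)).comp l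
    (((hasDerivAt_id l).const_mul b).const_sub e)
  refine (((hA.const_mul (1 / (2 * a))).const_sub ((b - a) / (2 * a * b) * e ^ 2)).add
    (hB.const_mul (1 / (2 * b)))).congr_deriv ?_
  field_simp
  ring

theorem hasDerivAt_deltaGap_snd (a b l e : ℝ) :
    HasDerivAt (fun y => deltaGap a b l y)
      ((b - a) / (a * b) * e - max 0 (e - a * l) / a + max 0 (e - b * l) / b) e := by
  have hA := (hasDerivAt_max_zero_sq (e - a * l)).comp e ((hasDerivAt_id e).sub_const (a * l))
  have hB := (hasDerivAt_max_zero_sq (e - b * l)).comp e ((hasDerivAt_id e).sub_const (b * l))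
  refine ((((hasDerivAt_pow 2 e).const_mul ((b - a) / (2 * a * b))).sub
    (hA.const_mul (1 / (2 * a)))).add (hB.const_mul (1 / (2 * b)))).congr_deriv ?_
  push_cast
  ring

theorem deltaGap_partialDeriv_prod_nonneg (a b : ℝ) (ha : 0 < a) (hab : a < b) :
    ∀ l e : ℝ,
      0 ≤ deriv (fun x => deltaGap a b x e) l * deriv (fun y => deltaGap a b l y) e := by
  intro l e
  have hb : 0 < b := ha.trans hab
  rw [(hasDerivAt_deltaGap_fst ha.ne' hb.ne' l e).deriv, (hasDerivAt_deltaGap_snd a b l e).deriv]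
  have hsnd : (b - a) / (a * b) * e - max 0 (e - a * l) / a + max 0 (e - b * l) / b
      = ((b - a) * e - b * max 0 (e - a * l) + a * max 0 (e - b * l)) / (a * b) := by
    field_simp
  rw [hsnd, ← mul_div_assoc]
  exact div_nonneg (max_zero_sub_mul_nonneg ha.le hb.le l e) (mul_pos ha hb).le
end
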